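/- Let 0 < λ ≤ √6, let J denote the 3×3 Jacobian matrix of the reduced vector field F at P₂ = (0, √((6−λ²)/18), λ/3), and let v = ∇f(P₂) = (0, √(2(6−λ²))/3, λ/3), where f(S,U,P) = S² + U² + P²/2. Then J·v = (λ²/3 − 2/3)·v; i.e., the normal vector to the Bianchi I constraint surface at P₂ is an eigenvector of the linearization with eigenvalue ε₂ = −2/3 + λ²/3. Consequently the tangent plane to the surface {f = 1/3} at P₂ coincides with the eigenspace of the eigenvalue ε₁ = −1 + λ²/6. -/

import Mathlib

/-- The reduced vector field `F : ℝ³ → ℝ³` in the variables `(S, U, P)`. -/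
noncomputable def Fvec (lam : ℝ) (x : Fin 3 → ℝ) : Fin 3 → ℝ :=
  ![-1 / (3 * Real.sqrt 3) - (2 / 3) * x 0 + x 0 ^ 2 / Real.sqrt 3
      + x 1 ^ 2 / Real.sqrt 3 + x 2 ^ 2 / (2 * Real.sqrt 3)
      + 2 * x 0 ^ 3 - x 0 * x 1 ^ 2 + x 0 * x 2 ^ 2,
    x 1 * (1 / 3 - (lam / 2) * x 2 + 2 * x 0 ^ 2 - x 1 ^ 2 + x 2 ^ 2),
    -(2 / 3) * x 2 + lam * x 1 ^ 2 + 2 * x 0 ^ 2 * x 2 - x 1 ^ 2 * x 2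
      + x 2 ^ 3]

/-- The Jacobian matrix of `F` at `x`, with the convention that row `i`
contains the partial derivatives with respect to the `i`-th variable:
entry `(i, j)` is `∂F_j/∂x_i`. -/
noncomputable def jac (lam : ℝ) (x : Fin 3 → ℝ) : Matrix (Fin 3) (Fin 3) ℝ :=
  Matrix.of fun i j => deriv (fun s => Fvec lam (Function.update x i s) j) (x i)

/-!
At a point with `S = 0` the derivatives of `F_U` and `F_P` with respect to `S` carry a factor
`S` and vanish, so only the `(U, P)` block of the Jacobian acts on `v = ∇f(P₂) = (0, 2U, λ/3)`,
where `U = √((6 - λ²)/18)`. At `P = λ/3` the `P`-component of `J v` equals `(λ²/3 - 2/3) λ/3`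
identically, and the `U`-component equals `(λ²/3 - 2/3) 2U` exactly because `18 U² = 6 - λ²`.
-/

theorem deriv_eq_of_forall_eq_cubic {f : ℝ → ℝ} {b c d : ℝ}
    (hf : ∀ s, f s = f 0 + b * s + c * s ^ 2 + d * s ^ 3) (x : ℝ) :
    deriv f x = b + 2 * c * x + 3 * d * x ^ 2 := by
  rw [funext hf]
  refine HasDerivAt.deriv ?_
  convert (((hasDerivAt_id x).const_mul b).const_add (f 0)).add
    (((hasDerivAt_pow 2 x).const_mul c).add ((hasDerivAt_pow 3 x).const_mul d)) using 1
  · ext s; simp only [id, Pi.add_apply]; ring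
  · push_cast; ring

theorem jac_eq (lam S U P : ℝ) :
    jac lam ![S, U, P] =
      !![-2 / 3 + 2 * S / √3 + 6 * S ^ 2 - U ^ 2 + P ^ 2, 4 * S * U, 4 * S * P;
        2 * U / √3 - 2 * S * U, 1 / 3 - lam / 2 * P + 2 * S ^ 2 - 3 * U ^ 2 + P ^ 2,
          2 * (lam - P) * U;
        P / √3 + 2 * S * P, (2 * P - lam / 2) * U, -2 / 3 + 2 * S ^ 2 - U ^ 2 + 3 * P ^ 2] := by
  ext i j
  fin_cases i <;> fin_cases j <;>
    simp only [jac, Matrix.of_apply, Fvec, Function.update_apply, Fin.isValue, Fin.zero_eta,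
      Fin.mk_one, Fin.reduceFinMk, Matrix.cons_val, Matrix.cons_val_zero, Matrix.cons_val_one,
      Fin.reduceEq, ↓reduceIte]
  · exact (deriv_eq_of_forall_eq_cubic (b := -2 / 3 - U ^ 2 + P ^ 2) (c := 1 / √3) (d := 2)
      (fun s => by ring) S).trans (by ring)
  · exact (deriv_eq_of_forall_eq_cubic (b := 0) (c := 2 * U) (d := 0)
      (fun s => by ring) S).trans (by ring)
  · exact (deriv_eq_of_forall_eq_cubic (b := 0) (c := 2 * P) (d := 0)
      (fun s => by ring) S).trans (by ring)
  · exact (deriv_eq_of_forall_eq_cubic (b := 0) (c := 1 / √3 - S) (d := 0)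
      (fun s => by ring) U).trans (by ring)
  · exact (deriv_eq_of_forall_eq_cubic (b := 1 / 3 - lam / 2 * P + 2 * S ^ 2 + P ^ 2) (c := 0)
      (d := -1) (fun s => by ring) U).trans (by ring)
  · exact (deriv_eq_of_forall_eq_cubic (b := 0) (c := lam - P) (d := 0)
      (fun s => by ring) U).trans (by ring)
  · exact (deriv_eq_of_forall_eq_cubic (b := 0) (c := 1 / (2 * √3) + S) (d := 0)
      (fun s => by ring) P).trans (by ring)
  · exact (deriv_eq_of_forall_eq_cubic (b := -(lam / 2 * U)) (c := U) (d := 0)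
      (fun s => by ring) P).trans (by ring)
  · exact (deriv_eq_of_forall_eq_cubic (b := -2 / 3 + 2 * S ^ 2 - U ^ 2) (c := 0) (d := 1)
      (fun s => by ring) P).trans (by ring)

open Matrix in
theorem jac_mulVec_gradient_at_P2 (lam u : ℝ) (hu : 18 * u ^ 2 = 6 - lam ^ 2) :
    jac lam ![0, u, lam / 3] *ᵥ ![0, 2 * u, lam / 3] =
      (lam ^ 2 / 3 - 2 / 3) • ![0, 2 * u, lam / 3] := by
  rw [jac_eq, smul_vec3]
  simp only [cons_mulVec, empty_mulVec, vec3_dotProduct', smul_eq_mul]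
  refine vec3_eq ?_ ?_ ?_
  · ring
  · linear_combination (-u / 3) * hu
  · ring

/-- For `0 < λ ≤ √6`, the gradient
`v = ∇f(P₂) = (0, √(2(6−λ²))/3, λ/3)` of the constraint function
`f(S,U,P) = S² + U² + P²/2` — the normal vector to the Bianchi I constraint
surface `{f = 1/3}` at `P₂ = (0, √((6−λ²)/18), λ/3)` — is an eigenvector of
the Jacobian `J` of the reduced vector field at `P₂` with eigenvalue
`ε₂ = −2/3 + λ²/3`, i.e. `J·v = (λ²/3 − 2/3)·v`. Consequently the tangent
plane to `{f = 1/3}` at `P₂` coincides with the eigenspace of the eigenvalue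
`ε₁ = −1 + λ²/6`. -/
theorem normal_vector_eigenvector_at_P2
    (lam : ℝ) (hlam : 0 < lam) (hlam6 : lam ≤ Real.sqrt 6) :
    (jac lam ![0, Real.sqrt ((6 - lam ^ 2) / 18), lam / 3]).mulVec
        ![0, Real.sqrt (2 * (6 - lam ^ 2)) / 3, lam / 3]
      = (lam ^ 2 / 3 - 2 / 3) •
          ![0, Real.sqrt (2 * (6 - lam ^ 2)) / 3, lam / 3] := by
  have hlam_sq : lam ^ 2 ≤ 6 := (Real.le_sqrt' hlam).mp hlam6
  have hv : √(2 * (6 - lam ^ 2)) / 3 = 2 * √((6 - lam ^ 2) / 18) := by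
    rw [show (6 - lam ^ 2) / 18 = 2 * (6 - lam ^ 2) / 6 ^ 2 by ring,
      Real.sqrt_div' _ (by positivity), Real.sqrt_sq (by norm_num)]
    ring
  rw [hv]
  refine jac_mulVec_gradient_at_P2 lam _ ?_
  rw [Real.sq_sqrt (by linarith)]
  ring
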